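/- arXiv:2006.09361 — 3 statements merged into one kernel-verified Lean document; each statement's English description precedes it below -/
import Mathlib

section
/- Let h : ℝ^d → ℝ have ℓ-Lipschitz gradient, and let τ > 0. Then for all x ∈ ℝ^d, the gradient of the Gaussian smoothed function h_τ(x) = E_ν[h(x + τν)] admits the representation ∇h_τ(x) = E_ν[ ((h(x + τν) − h(x))/τ) ν ], where ν is a standard Gaussian random vector on ℝ^d; in particular the single-point zeroth-order estimator ((h(x + τν) − h(x))/τ) ν is an unbiased estimator of ∇h_τ(x). -/
/-
Differentiating under the integral sign (legitimate because `∇h` has linear growth and the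
Gaussian has all moments) gives `∇h_τ(x) = E[∇h(x + τν)]`. The function
`g(ν) = (h(x + τν) − h(x))/τ` has gradient `∇h(x + τν)`, so it remains to apply Gaussian
integration by parts `E[∇g(ν)] = E[g(ν) ν]`. Coordinatewise this is the one-dimensional identity
`E[g'(t)] = E[t g(t)]` on each line parallel to a coordinate axis, which is ordinary integration
by parts against the density `φ`, using `φ' = −t φ`; Fubini over the product structure of
`N(0, I_d)` assembles the lines.
-/

open MeasureTheory ProbabilityTheory

/-- The standard Gaussian measure `N(0, I_d)` on `ℝ^d`. -/
noncomputable def stdGaussian (d : ℕ) : Measure (EuclideanSpace ℝ (Fin d)) :=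
  (Measure.pi fun _ : Fin d => gaussianReal 0 1).map
    (EuclideanSpace.equiv (Fin d) ℝ).symm

open InnerProductSpace
open scoped NNReal ENNReal

section LipschitzDerivative

variable {E F : Type*} [NormedAddCommGroup E] [NormedAddCommGroup F]

lemma LipschitzWith.norm_le_norm_add_mul {φ : E → F} {K : ℝ≥0} (hφ : LipschitzWith K φ)
    (x y : E) : ‖φ y‖ ≤ ‖φ x‖ + K * ‖y - x‖ := by
  have := hφ.dist_le_mul y x
  rw [dist_eq_norm, dist_eq_norm] at this
  linarith [norm_le_norm_add_norm_sub' (φ y) (φ x)]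

variable [NormedSpace ℝ E] [NormedSpace ℝ F] {f : E → F} {L : ℝ≥0}

lemma norm_sub_le_of_lipschitzWith_fderiv (hf : Differentiable ℝ f)
    (hL : LipschitzWith L (fderiv ℝ f)) (x y : E) :
    ‖f y - f x‖ ≤ (‖fderiv ℝ f x‖ + L * ‖y - x‖) * ‖y - x‖ := by
  have hy : y ∈ Metric.closedBall x ‖y - x‖ := by simp [dist_eq_norm]
  refine Convex.norm_image_sub_le_of_norm_fderiv_le (fun z _ => hf z) (fun z hz => ?_)
    (convex_closedBall x _) (Metric.mem_closedBall_self (norm_nonneg _)) hy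
  rw [Metric.mem_closedBall, dist_eq_norm] at hz
  exact (hL.norm_le_norm_add_mul x z).trans (by gcongr)

lemma norm_comp_add_smul_sub_le (hf : Differentiable ℝ f) (hL : LipschitzWith L (fderiv ℝ f))
    (x : E) (τ : ℝ) (ν : E) :
    ‖f (x + τ • ν) - f x‖ ≤ (‖fderiv ℝ f x‖ * |τ| + L * τ ^ 2 * ‖ν‖) * ‖ν‖ := by
  have := norm_sub_le_of_lipschitzWith_fderiv hf hL x (x + τ • ν)
  rw [add_sub_cancel_left, norm_smul, Real.norm_eq_abs] at this
  calc _ ≤ _ := this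
    _ = _ := by rw [← sq_abs τ]; ring

end LipschitzDerivative

section Moments

variable {E F : Type*} [NormedAddCommGroup E] [MeasurableSpace E] [NormedAddCommGroup F]
  {μ : Measure E} [IsFiniteMeasure μ]

lemma integrable_of_norm_le_affine_mul_norm_pow {k : ℕ} (hμ : MemLp id (k + 1) μ)
    {φ : E → F} (hφ : AEStronglyMeasurable φ μ) (a b : ℝ)
    (hbound : ∀ ν, ‖φ ν‖ ≤ (a + b * ‖ν‖) * ‖ν‖ ^ k) : Integrable φ μ := by
  have hk1 : Integrable (fun ν => ‖ν‖ ^ (k + 1)) μ :=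
    (show MemLp id (k + 1 : ℕ) μ by exact_mod_cast hμ).integrable_norm_pow'
  have hk : Integrable (fun ν => ‖ν‖ ^ k) μ :=
    integrable_norm_pow_of_le hμ.aestronglyMeasurable k.le_succ hk1
  refine ((hk.const_mul a).add (hk1.const_mul b)).mono' hφ (ae_of_all _ fun ν => ?_)
  simpa [pow_succ, add_mul, mul_assoc, mul_comm, mul_left_comm] using hbound ν

variable [NormedSpace ℝ E] [BorelSpace E] [SecondCountableTopology E]

lemma LipschitzWith.integrable_comp_add_smul {φ : E → F} {K : ℝ≥0} (hφ : LipschitzWith K φ)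
    (hμ : MemLp id 1 μ) (x : E) (τ : ℝ) : Integrable (fun ν => φ (x + τ • ν)) μ := by
  refine integrable_of_norm_le_affine_mul_norm_pow (k := 0) (by simpa using hμ)
    (hφ.continuous.comp (by fun_prop)).aestronglyMeasurable ‖φ x‖ (K * |τ|) fun ν => ?_
  have := hφ.norm_le_norm_add_mul x (x + τ • ν)
  rw [add_sub_cancel_left, norm_smul, Real.norm_eq_abs] at this
  linarith

variable [NormedSpace ℝ F] {f : E → F} {L : ℝ≥0}

lemma integrable_comp_add_smul_sub (hμ : MemLp id 2 μ) (hf : Differentiable ℝ f)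
    (hL : LipschitzWith L (fderiv ℝ f)) (x : E) (τ : ℝ) :
    Integrable (fun ν => f (x + τ • ν) - f x) μ :=
  integrable_of_norm_le_affine_mul_norm_pow (k := 1) (by simpa [one_add_one_eq_two] using hμ)
    (hf.continuous.comp (by fun_prop) |>.sub continuous_const).aestronglyMeasurable _ _
    fun ν => (norm_comp_add_smul_sub_le hf hL x τ ν).trans_eq (by rw [pow_one])

lemma integrable_comp_add_smul_sub_smul {f : E → ℝ} (hμ : MemLp id 3 μ) (hf : Differentiable ℝ f)
    (hL : LipschitzWith L (fderiv ℝ f)) (x : E) (τ : ℝ) :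
    Integrable (fun ν => (f (x + τ • ν) - f x) • ν) μ := by
  have := hf.continuous
  refine integrable_of_norm_le_affine_mul_norm_pow (k := 2) (by convert hμ; norm_num)
    (by fun_prop) (‖fderiv ℝ f x‖ * |τ|) (L * τ ^ 2) fun ν => ?_
  rw [norm_smul, pow_two ‖ν‖, ← mul_assoc]
  exact mul_le_mul_of_nonneg_right (norm_comp_add_smul_sub_le hf hL x τ ν) (norm_nonneg ν)

end Moments

section Smoothing

variable {E F : Type*} [NormedAddCommGroup E] [NormedSpace ℝ E] [MeasurableSpace E]
  [BorelSpace E] [SecondCountableTopology E] [NormedAddCommGroup F] [NormedSpace ℝ F]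
  {μ : Measure E} [IsFiniteMeasure μ] {L : ℝ≥0}

theorem hasFDerivAt_integral_comp_add_smul (hμ : MemLp id 2 μ) {f : E → F}
    (hf : Differentiable ℝ f) (hL : LipschitzWith L (fderiv ℝ f)) (τ : ℝ) (x : E) :
    HasFDerivAt (fun z => ∫ ν, f (z + τ • ν) ∂μ) (∫ ν, fderiv ℝ f (x + τ • ν) ∂μ) x := by
  have hfc := hf.continuous
  have hf'c := hL.continuous
  refine hasFDerivAt_integral_of_dominated_of_fderiv_le (F := fun z ν => f (z + τ • ν))
    (bound := fun ν => ‖fderiv ℝ f x‖ + L + L * |τ| * ‖ν‖)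
    (Metric.ball_mem_nhds x one_pos)
    (Filter.Eventually.of_forall fun z => (by fun_prop : Continuous _).aestronglyMeasurable)
    (((integrable_comp_add_smul_sub hμ hf hL x τ).add (integrable_const (f x))).congr
      (ae_of_all _ fun ν => sub_add_cancel _ _))
    (hf'c.comp (by fun_prop : Continuous fun ν : E => x + τ • ν)).aestronglyMeasurable
    (ae_of_all _ fun ν z hz => ?_) ?_
    (ae_of_all _ fun ν z _ => (hasFDerivAt_comp_add_right _).2 (hf _).hasFDerivAt)
  · rw [Metric.mem_ball, dist_eq_norm] at hz
    have hz' : ‖z + τ • ν - x‖ ≤ 1 + |τ| * ‖ν‖ := by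
      rw [add_sub_right_comm]
      exact (norm_add_le _ _).trans (by rw [norm_smul, Real.norm_eq_abs]; linarith)
    calc _ ≤ _ := hL.norm_le_norm_add_mul x (z + τ • ν)
      _ ≤ ‖fderiv ℝ f x‖ + L * (1 + |τ| * ‖ν‖) := by gcongr
      _ = _ := by ring
  · exact integrable_of_norm_le_affine_mul_norm_pow (k := 0)
      (by simpa using hμ.mono_exponent one_le_two) (by fun_prop) _ _
      fun ν => by rw [pow_zero, mul_one]; exact (Real.norm_of_nonneg (by positivity)).le

end Smoothing

section Gradient

variable {E : Type*} [NormedAddCommGroup E] [InnerProductSpace ℝ E] [CompleteSpace E]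
  {f : E → ℝ} {L : ℝ≥0}

lemma LipschitzWith.fderiv_of_gradient (hL : LipschitzWith L (gradient f)) :
    LipschitzWith L (fderiv ℝ f) := by
  rw [← toDual_comp_gradient]
  simpa using (toDual ℝ E).lipschitz.comp hL

lemma hasGradientAt_comp_add_smul_sub_div {x ν : E} {τ : ℝ}
    (hf : DifferentiableAt ℝ f (x + τ • ν)) (hτ : τ ≠ 0) :
    HasGradientAt (fun ν => (f (x + τ • ν) - f x) / τ) (gradient f (x + τ • ν)) ν := by
  rw [hasGradientAt_iff_hasFDerivAt, toDual_gradient]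
  simp_rw [div_eq_inv_mul, ← smul_eq_mul (a := τ⁻¹)]
  refine (((hf.hasFDerivAt.comp ν ((hasFDerivAt_id ν).const_smul τ |>.const_add x)).sub_const
    (f x)).const_smul τ⁻¹).congr_fderiv ?_
  ext y
  simp [hτ]

variable [MeasurableSpace E] [BorelSpace E] [SecondCountableTopology E] {μ : Measure E}
  [IsFiniteMeasure μ]

theorem hasGradientAt_integral_comp_add_smul (hμ : MemLp id 2 μ) (hf : Differentiable ℝ f)
    (hL : LipschitzWith L (gradient f)) (τ : ℝ) (x : E) :
    HasGradientAt (fun z => ∫ ν, f (z + τ • ν) ∂μ) (∫ ν, gradient f (x + τ • ν) ∂μ) x := by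
  have hL' := hL.fderiv_of_gradient
  have hint := hL.integrable_comp_add_smul (hμ.mono_exponent one_le_two) x τ
  rw [hasGradientAt_iff_hasFDerivAt]
  refine (hasFDerivAt_integral_comp_add_smul hμ hf hL' τ x).congr_fderiv ?_
  ext y
  rw [ContinuousLinearMap.integral_apply, toDual_apply_apply, real_inner_comm,
    ← integral_inner hint]
  · simp_rw [← toDual_gradient, toDual_apply_apply, real_inner_comm]
  · exact hL'.integrable_comp_add_smul (hμ.mono_exponent one_le_two) x τ

end Gradient

section GaussianIntegrationByParts

open Real

lemma hasDerivAt_gaussianPDFReal_zero_one (t : ℝ) :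
    HasDerivAt (gaussianPDFReal 0 1) (-t * gaussianPDFReal 0 1 t) t := by
  have hexponent : HasDerivAt (fun s : ℝ => -s ^ 2 / 2) (-t) t :=
    ((hasDerivAt_pow 2 t).neg.div_const 2).congr_deriv (by simp; ring)
  simp only [gaussianPDFReal_def, sub_zero, NNReal.coe_one, mul_one]
  exact (hexponent.exp.const_mul (√(2 * π))⁻¹).congr_deriv (by ring)

lemma integrable_gaussianReal_iff {f : ℝ → ℝ} :
    Integrable f (gaussianReal 0 1) ↔ Integrable (fun t => f t * gaussianPDFReal 0 1 t) := by
  rw [gaussianReal_of_var_ne_zero 0 one_ne_zero, integrable_withDensity_iff_integrable_smul'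
    (measurable_gaussianPDF 0 1) (ae_of_all _ fun _ => gaussianPDF_lt_top)]
  simp_rw [toReal_gaussianPDF, smul_eq_mul, mul_comm]

lemma integral_deriv_gaussianReal_eq_integral_mul {f f' : ℝ → ℝ} (hf : ∀ t, HasDerivAt f (f' t) t)
    (hf'_int : Integrable f' (gaussianReal 0 1)) (hf_int : Integrable f (gaussianReal 0 1))
    (hmul_int : Integrable (fun t => t * f t) (gaussianReal 0 1)) :
    ∫ t, f' t ∂gaussianReal 0 1 = ∫ t, t * f t ∂gaussianReal 0 1 := by
  rw [integrable_gaussianReal_iff] at hf'_int hf_int hmul_int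
  have := integral_mul_deriv_eq_deriv_mul_of_integrable (fun t _ => hf t)
    (fun t _ => hasDerivAt_gaussianPDFReal_zero_one t)
    (hmul_int.neg.congr (ae_of_all _ fun t => by simp; ring)) hf'_int hf_int
  simp_rw [integral_gaussianReal_eq_integral_smul one_ne_zero, smul_eq_mul]
  calc ∫ t, gaussianPDFReal 0 1 t * f' t = ∫ t, f' t * gaussianPDFReal 0 1 t := by
        simp_rw [mul_comm]
    _ = -∫ t, f t * (-t * gaussianPDFReal 0 1 t) := by rw [this, neg_neg]
    _ = ∫ t, gaussianPDFReal 0 1 t * (t * f t) := by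
        rw [← integral_neg]; congr 1 with t; ring

lemma stdGaussian_eq (d : ℕ) :
    stdGaussian d = ProbabilityTheory.stdGaussian (EuclideanSpace ℝ (Fin d)) := by
  rw [← map_pi_eq_stdGaussian]
  rfl

instance isGaussian_stdGaussian (d : ℕ) : IsGaussian (stdGaussian d) := by
  rw [stdGaussian_eq]
  infer_instance

noncomputable def insertCoord {n : ℕ} (i : Fin (n + 1)) :
    ℝ × (Fin n → ℝ) ≃ᵐ EuclideanSpace ℝ (Fin (n + 1)) :=
  (MeasurableEquiv.piFinSuccAbove (fun _ => ℝ) i).symm.trans (MeasurableEquiv.toLp 2 _)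

lemma insertCoord_apply {n : ℕ} (i : Fin (n + 1)) (p : ℝ × (Fin n → ℝ)) :
    insertCoord i p = WithLp.toLp 2 (i.insertNth p.1 p.2) := rfl

lemma measurePreserving_insertCoord {n : ℕ} (i : Fin (n + 1)) :
    MeasurePreserving (insertCoord i)
      ((gaussianReal 0 1).prod (Measure.pi fun _ => gaussianReal 0 1)) (stdGaussian (n + 1)) :=
  (measurePreserving_piFinSuccAbove (fun _ => gaussianReal 0 1) i).symm _ |>.trans
    ⟨(MeasurableEquiv.toLp 2 _).measurable, rfl⟩

lemma insertCoord_eq_add_smul {n : ℕ} (i : Fin (n + 1)) (t : ℝ) (w : Fin n → ℝ) :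
    insertCoord i (t, w) = insertCoord i (0, w) + t • EuclideanSpace.single i 1 := by
  ext j
  rcases Fin.eq_self_or_eq_succAbove i j with rfl | ⟨k, rfl⟩
  · simp [insertCoord_apply]
  · simp [insertCoord_apply, (Fin.succAbove_ne i k)]

lemma hasDerivAt_insertCoord {n : ℕ} (i : Fin (n + 1)) (w : Fin n → ℝ) (t : ℝ) :
    HasDerivAt (fun t => insertCoord i (t, w)) (EuclideanSpace.single i 1) t := by
  rw [funext fun t => insertCoord_eq_add_smul i t w]
  exact (((hasDerivAt_id t).smul_const _).const_add _).congr_deriv (one_smul ℝ _)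

variable {d : ℕ}

theorem integral_fderiv_single_stdGaussian_eq_integral_mul {g : EuclideanSpace ℝ (Fin d) → ℝ}
    {g' : EuclideanSpace ℝ (Fin d) → StrongDual ℝ (EuclideanSpace ℝ (Fin d))}
    (hg : ∀ ν, HasFDerivAt g (g' ν) ν) (i : Fin d)
    (hg'_int : Integrable (fun ν => g' ν (EuclideanSpace.single i 1)) (stdGaussian d))
    (hg_int : Integrable g (stdGaussian d))
    (hmul_int : Integrable (fun ν => ν i * g ν) (stdGaussian d)) :
    ∫ ν, g' ν (EuclideanSpace.single i 1) ∂stdGaussian d = ∫ ν, ν i * g ν ∂stdGaussian d := by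
  obtain ⟨n, rfl⟩ : ∃ n, d = n + 1 := ⟨d - 1, by have := i.pos; omega⟩
  have hmp := measurePreserving_insertCoord i
  rw [← hmp.integrable_comp_emb (insertCoord i).measurableEmbedding] at hg'_int hg_int hmul_int
  simp only [Function.comp_def] at hg'_int hg_int hmul_int
  rw [← hmp.integral_comp', ← hmp.integral_comp', integral_prod_symm _ hg'_int,
    integral_prod_symm _ hmul_int]
  refine integral_congr_ae ?_
  filter_upwards [hg'_int.prod_left_ae, hg_int.prod_left_ae, hmul_int.prod_left_ae]
    with w h1 h2 h3
  have hline : ∀ t, HasDerivAt (fun t => g (insertCoord i (t, w)))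
      (g' (insertCoord i (t, w)) (EuclideanSpace.single i 1)) t := fun t =>
    (hg _).comp_hasDerivAt t (hasDerivAt_insertCoord i w t)
  simpa [insertCoord_apply] using
    integral_deriv_gaussianReal_eq_integral_mul hline h1 h2 (by simpa [insertCoord_apply] using h3)

theorem integral_gradient_stdGaussian_eq_integral_smul {g : EuclideanSpace ℝ (Fin d) → ℝ}
    {G : EuclideanSpace ℝ (Fin d) → EuclideanSpace ℝ (Fin d)}
    (hg : ∀ ν, HasGradientAt g (G ν) ν) (hG_int : Integrable G (stdGaussian d))
    (hg_int : Integrable g (stdGaussian d))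
    (hmul_int : Integrable (fun ν => g ν • ν) (stdGaussian d)) :
    ∫ ν, G ν ∂stdGaussian d = ∫ ν, g ν • ν ∂stdGaussian d := by
  ext i
  have hcoord : ∀ ν, toDual ℝ _ (G ν) (EuclideanSpace.single i 1) = G ν i := fun ν => by
    simp [EuclideanSpace.inner_single_right]
  have hproj : ∀ {F : EuclideanSpace ℝ (Fin d) → EuclideanSpace ℝ (Fin d)},
      Integrable F (stdGaussian d) → (∫ ν, F ν ∂stdGaussian d) i = ∫ ν, F ν i ∂stdGaussian d :=
    fun hF => ((EuclideanSpace.proj i).integral_comp_comm hF).symm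
  rw [hproj hG_int, hproj hmul_int]
  simp only [PiLp.smul_apply, smul_eq_mul, ← hcoord, mul_comm (g _)]
  refine integral_fderiv_single_stdGaussian_eq_integral_mul hg i ?_ hg_int ?_
  · simp only [hcoord]; exact (EuclideanSpace.proj (𝕜 := ℝ) i).integrable_comp hG_int
  · simpa [mul_comm] using (EuclideanSpace.proj (𝕜 := ℝ) i).integrable_comp hmul_int

end GaussianIntegrationByParts

/-- If `h : ℝ^d → ℝ` has `ℓ`-Lipschitz gradient and `τ > 0`, then for all `x`,
`∇h_τ(x) = E_ν[((h(x + τν) − h(x))/τ) ν]`, i.e. the single-point zeroth-order estimator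
`((h(x + τν) − h(x))/τ) ν` is an unbiased estimator of `∇h_τ(x)`. -/
theorem zo_vrgda_stmt6 (d : ℕ) (h : EuclideanSpace ℝ (Fin d) → ℝ) (ℓ τ : ℝ) (hτ : 0 < τ)
    (hdiff : Differentiable ℝ h)
    (hlip : ∀ x x', ‖gradient h x - gradient h x'‖ ≤ ℓ * ‖x - x'‖) :
    ∀ x, gradient (fun z => ∫ ν, h (z + τ • ν) ∂(stdGaussian d)) x =
      ∫ ν, ((h (x + τ • ν) - h x) / τ) • ν ∂(stdGaussian d) := by
  intro x
  have hL : LipschitzWith ‖ℓ‖₊ (gradient h) := LipschitzWith.of_dist_le_mul fun y y' => by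
    rw [dist_eq_norm, dist_eq_norm, coe_nnnorm, Real.norm_eq_abs]
    exact (hlip y y').trans (by gcongr; exact le_abs_self ℓ)
  have hL' := hL.fderiv_of_gradient
  have hmoment : ∀ p : ℝ≥0∞, p ≠ ∞ → MemLp id p (stdGaussian d) :=
    fun p hp => IsGaussian.memLp_id _ p hp
  rw [(hasGradientAt_integral_comp_add_smul (hmoment 2 (by simp)) hdiff hL τ x).gradient]
  refine integral_gradient_stdGaussian_eq_integral_smul
    (fun ν => hasGradientAt_comp_add_smul_sub_div (hdiff _) hτ.ne')
    (hL.integrable_comp_add_smul (hmoment 1 (by simp)) x τ)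
    ((integrable_comp_add_smul_sub (hmoment 2 (by simp)) hdiff hL' x τ).div_const τ) ?_
  refine ((integrable_comp_add_smul_sub_smul (hmoment 3 (by simp)) hdiff hL' x τ).smul τ⁻¹).congr
    (ae_of_all _ fun ν => ?_)
  simp [div_eq_inv_mul, mul_smul]
end

section
/- Let f : ℝ^{d1} × ℝ^{d2} → ℝ be differentiable with ℓ-Lipschitz gradient, and let μ₁, μ₂ > 0. Define the partially smoothed functions f_{μ₁}(x,y) = E_ν[f(x + μ₁ν, y)] with ν ~ N(0, I_{d1}) and f_{μ₂}(x,y) = E_ω[f(x, y + μ₂ω)] with ω ~ N(0, I_{d2}). Then for every (x,y) ∈ ℝ^{d1} × ℝ^{d2} and every pair of vectors v ∈ ℝ^{d1}, u ∈ ℝ^{d2}: (i) ‖∇_x f(x,y) − v‖² + ‖∇_y f(x,y) − u‖² ≤ 2(‖∇_x f_{μ₁}(x,y) − v‖² + ‖∇_y f_{μ₂}(x,y) − u‖²) + (μ₁²/2)ℓ²(d1+3)³ + (μ₂²/2)ℓ²(d2+3)³; and (ii) ‖∇_y f(x,y)‖² ≤ 2‖∇_y f_{μ₂}(x,y)‖²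 + (μ₂²/2)ℓ²(d2+3)³. -/
open MeasureTheory ProbabilityTheory

/-!
Differentiating under the integral, the gradient of the smoothing `z ↦ E[g (z + μ ν)]` is the
average `E[∇g (z + μ ν)]`, so it is within `ℓ |μ| E‖ν‖` of `∇g z`. For a standard Gaussian
`(E‖ν‖)² ≤ E‖ν‖² = d`, and `‖a‖² ≤ 2‖b‖² + 2‖a - b‖²` turns this into an error term
`2 ℓ² μ² d ≤ (μ²/2) ℓ² (d + 3)³`. Both parts of the theorem are this estimate for the partial maps
`f (·) y` and `f x`.
-/

open scoped NNReal RealInnerProductSpace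

theorem LipschitzWith.norm_le_add_mul_norm_sub {E F : Type*} [SeminormedAddCommGroup E]
    [SeminormedAddCommGroup F] {K : ℝ≥0} {φ : E → F} (hφ : LipschitzWith K φ) (w z : E) :
    ‖φ w‖ ≤ ‖φ z‖ + K * ‖w - z‖ :=
  (norm_le_norm_add_norm_sub' _ (φ z)).trans (by gcongr; exact hφ.norm_sub_le w z)

theorem abs_sub_le_of_lipschitzWith_fderiv {E : Type*} [NormedAddCommGroup E] [NormedSpace ℝ E]
    {g : E → ℝ} {K : ℝ≥0} (hg : Differentiable ℝ g) (hg' : LipschitzWith K (fderiv ℝ g))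
    (z h : E) :
    |g (z + h) - g z| ≤ (‖fderiv ℝ g z‖ + K * ‖h‖) * ‖h‖ := by
  have hbound : ∀ w ∈ Metric.closedBall z ‖h‖, ‖fderiv ℝ g w‖ ≤ ‖fderiv ℝ g z‖ + K * ‖h‖ :=
    fun w hw => (hg'.norm_le_add_mul_norm_sub w z).trans <| by
      gcongr; rwa [Metric.mem_closedBall, dist_eq_norm] at hw
  have h_mem : z + h ∈ Metric.closedBall z ‖h‖ := by simp
  simpa using (convex_closedBall z ‖h‖).norm_image_sub_le_of_norm_fderiv_le
    (fun w _ => hg w) hbound (Metric.mem_closedBall_self (norm_nonneg h)) h_mem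

section Smoothing

variable {E : Type*} [NormedAddCommGroup E] [NormedSpace ℝ E] [MeasurableSpace E]

noncomputable def smoothing (P : Measure E) (μ : ℝ) (g : E → ℝ) (z : E) : ℝ :=
  ∫ ν, g (z + μ • ν) ∂P

variable [OpensMeasurableSpace E] {P : Measure E} [IsFiniteMeasure P] {g : E → ℝ} {K : ℝ≥0}

theorem integrable_comp_add_smul (hP : MemLp id 2 P) (hg : Differentiable ℝ g)
    (hg' : LipschitzWith K (fderiv ℝ g)) (μ : ℝ) (z : E) :
    Integrable (fun ν => g (z + μ • ν)) P := by
  have h1 : Integrable (fun ν : E => ‖ν‖) P := (hP.integrable one_le_two).norm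
  have h2 : Integrable (fun ν : E => ‖ν‖ ^ 2) P := hP.integrable_norm_pow two_ne_zero
  refine (((integrable_const |g z|).add (h1.const_mul (‖fderiv ℝ g z‖ * |μ|))).add
    (h2.const_mul (K * μ ^ 2))).mono'
    (hg.continuous.comp (by fun_prop)).aestronglyMeasurable (ae_of_all _ fun ν => ?_)
  have h := abs_sub_le_of_lipschitzWith_fderiv hg hg' z (μ • ν)
  rw [norm_smul, Real.norm_eq_abs] at h
  calc ‖g (z + μ • ν)‖ ≤ |g z| + |g (z + μ • ν) - g z| := by
        simpa using abs_add_le (g z) (g (z + μ • ν) - g z)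
    _ ≤ |g z| + (‖fderiv ℝ g z‖ + K * (|μ| * ‖ν‖)) * (|μ| * ‖ν‖) := by gcongr
    _ = _ := by rw [Pi.add_apply, Pi.add_apply, ← sq_abs μ]; ring

variable [SecondCountableTopology E]

theorem integrable_fderiv_comp_add_smul (hP : MemLp id 2 P)
    (hg' : LipschitzWith K (fderiv ℝ g)) (μ : ℝ) (z : E) :
    Integrable (fun ν => fderiv ℝ g (z + μ • ν)) P := by
  refine ((integrable_const ‖fderiv ℝ g z‖).add
    ((hP.integrable one_le_two).norm.const_mul (K * |μ|))).mono'
    (hg'.continuous.comp (by fun_prop)).aestronglyMeasurable (ae_of_all _ fun ν => ?_)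
  calc ‖fderiv ℝ g (z + μ • ν)‖ ≤ ‖fderiv ℝ g z‖ + K * ‖z + μ • ν - z‖ :=
        hg'.norm_le_add_mul_norm_sub _ _
    _ = _ := by simp [norm_smul, mul_assoc]

theorem hasFDerivAt_smoothing (hP : MemLp id 2 P) (hg : Differentiable ℝ g)
    (hg' : LipschitzWith K (fderiv ℝ g)) (μ : ℝ) (z : E) :
    HasFDerivAt (smoothing P μ g) (∫ ν, fderiv ℝ g (z + μ • ν) ∂P) z := by
  refine hasFDerivAt_integral_of_dominated_of_fderiv_le (F := fun x ν => g (x + μ • ν))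
    (F' := fun x ν => fderiv ℝ g (x + μ • ν))
    (bound := fun ν => ‖fderiv ℝ g z‖ + K * (1 + |μ| * ‖ν‖)) (Metric.ball_mem_nhds z one_pos)
    (Filter.Eventually.of_forall fun x => (hg.continuous.comp (by fun_prop)).aestronglyMeasurable)
    (integrable_comp_add_smul hP hg hg' μ z)
    (hg'.continuous.comp (by fun_prop)).aestronglyMeasurable
    (ae_of_all _ fun ν x hx => ?_) ?_ (ae_of_all _ fun ν x _ => ?_)
  · refine (hg'.norm_le_add_mul_norm_sub _ z).trans ?_
    rw [Metric.mem_ball, dist_eq_norm] at hx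
    have : ‖x + μ • ν - z‖ ≤ 1 + |μ| * ‖ν‖ := by
      rw [add_sub_right_comm, ← Real.norm_eq_abs, ← norm_smul]
      exact (norm_add_le _ _).trans (by gcongr)
    gcongr
  · exact (integrable_const _).add
      (((integrable_const 1).add ((hP.integrable one_le_two).norm.const_mul |μ|)).const_mul _)
  · exact (hg _).hasFDerivAt.comp x ((hasFDerivAt_id x).add_const _)

theorem norm_fderiv_smoothing_sub_le [IsProbabilityMeasure P] (hP : MemLp id 2 P)
    (hg : Differentiable ℝ g) (hg' : LipschitzWith K (fderiv ℝ g)) (μ : ℝ) (z : E) :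
    ‖fderiv ℝ (smoothing P μ g) z - fderiv ℝ g z‖ ≤ K * |μ| * ∫ ν, ‖ν‖ ∂P := by
  have hint := integrable_fderiv_comp_add_smul hP hg' μ z
  rw [(hasFDerivAt_smoothing hP hg hg' μ z).fderiv, ← integral_const_mul]
  calc ‖∫ ν, fderiv ℝ g (z + μ • ν) ∂P - fderiv ℝ g z‖
      = ‖∫ ν, (fderiv ℝ g (z + μ • ν) - fderiv ℝ g z) ∂P‖ := by
        rw [integral_sub hint (integrable_const _), integral_const, probReal_univ, one_smul]
    _ ≤ ∫ ν, ‖fderiv ℝ g (z + μ • ν) - fderiv ℝ g z‖ ∂P := norm_integral_le_integral_norm _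
    _ ≤ ∫ ν, K * |μ| * ‖ν‖ ∂P := by
        refine integral_mono (hint.sub (integrable_const _)).norm
          ((hP.integrable one_le_two).norm.const_mul _) fun ν => ?_
        simpa [norm_smul, mul_assoc] using hg'.norm_sub_le (z + μ • ν) z
end Smoothing

section GaussianMoments

variable {E : Type*} [NormedAddCommGroup E] [InnerProductSpace ℝ E] [FiniteDimensional ℝ E]
  [MeasurableSpace E] [BorelSpace E]

theorem integral_norm_sq_stdGaussian :
    ∫ x, ‖x‖ ^ 2 ∂(ProbabilityTheory.stdGaussian E) = Module.finrank ℝ E := by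
  set b := stdOrthonormalBasis ℝ E
  have hcoord : ∀ i, ∫ x, ⟪b i, x⟫ ^ 2 ∂(ProbabilityTheory.stdGaussian E) = 1 := fun i => by
    -- the covariance form of `stdGaussian E` is the inner product, and its mean is `0`
    have h := covarianceBilin_apply IsGaussian.memLp_two_id
      (μ := ProbabilityTheory.stdGaussian E) (b i) (b i)
    rw [covarianceBilin_stdGaussian, innerSL_apply_apply ℝ, real_inner_self_eq_norm_sq,
      b.orthonormal.1 i] at h
    simpa [sq] using h.symm
  have hint : ∀ i, Integrable (fun x => ⟪b i, x⟫ ^ 2) (ProbabilityTheory.stdGaussian E) :=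
    fun i => ((innerSL ℝ (b i)).comp_memLp' IsGaussian.memLp_two_id).integrable_sq
  simp_rw [← b.sum_sq_inner_right]
  rw [integral_finsetSum _ fun i _ => hint i]
  simp [hcoord]

theorem sq_integral_norm_stdGaussian_le :
    (∫ x, ‖x‖ ∂(ProbabilityTheory.stdGaussian E)) ^ 2 ≤ Module.finrank ℝ E := by
  have h := variance_eq_sub (IsGaussian.memLp_two_id (μ := ProbabilityTheory.stdGaussian E)).norm
  rw [← integral_norm_sq_stdGaussian]
  have := variance_nonneg (fun x : E => ‖x‖) (ProbabilityTheory.stdGaussian E)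
  simp only [id, Pi.pow_apply] at h
  linarith

end GaussianMoments

section Gradient

variable {E : Type*} [NormedAddCommGroup E] [InnerProductSpace ℝ E] [CompleteSpace E]

theorem norm_gradient_sub_gradient (g h : E → ℝ) (a b : E) :
    ‖gradient g a - gradient h b‖ = ‖fderiv ℝ g a - fderiv ℝ h b‖ := by
  rw [gradient, gradient, ← LinearIsometryEquiv.map_sub, LinearIsometryEquiv.norm_map]

theorem lipschitzWith_fderiv_of_sq_norm_gradient_sub_le {g : E → ℝ} {ℓ : ℝ}
    (h : ∀ a b, ‖gradient g a - gradient g b‖ ^ 2 ≤ ℓ ^ 2 * ‖a - b‖ ^ 2) :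
    LipschitzWith ‖ℓ‖₊ (fderiv ℝ g) := by
  refine LipschitzWith.of_dist_le_mul fun a b => ?_
  rw [dist_eq_norm, dist_eq_norm, ← norm_gradient_sub_gradient, coe_nnnorm, Real.norm_eq_abs]
  refine (pow_le_pow_iff_left₀ (norm_nonneg _) (by positivity) two_ne_zero).mp ?_
  rw [mul_pow, sq_abs]
  exact h a b

variable [FiniteDimensional ℝ E] [MeasurableSpace E] [BorelSpace E]

theorem sq_norm_gradient_sub_le_of_stdGaussian_smoothing {g : E → ℝ} {K : ℝ≥0}
    (hg : Differentiable ℝ g) (hg' : LipschitzWith K (fderiv ℝ g)) (μ : ℝ) (z w : E) :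
    ‖gradient g z - w‖ ^ 2 ≤
      2 * ‖gradient (smoothing (ProbabilityTheory.stdGaussian E) μ g) z - w‖ ^ 2 +
        2 * (K * μ) ^ 2 * Module.finrank ℝ E := by
  set G := gradient (smoothing (ProbabilityTheory.stdGaussian E) μ g) z
  have hclose : ‖gradient g z - G‖ ^ 2 ≤ (K * μ) ^ 2 * Module.finrank ℝ E := by
    have h := norm_fderiv_smoothing_sub_le
      (IsGaussian.memLp_two_id (μ := ProbabilityTheory.stdGaussian E)) hg hg' μ z
    rw [← norm_gradient_sub_gradient, norm_sub_rev] at h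
    calc ‖gradient g z - G‖ ^ 2
        ≤ (K * |μ| * ∫ ν, ‖ν‖ ∂(ProbabilityTheory.stdGaussian E)) ^ 2 := by gcongr
      _ = (K * μ) ^ 2 * (∫ ν, ‖ν‖ ∂(ProbabilityTheory.stdGaussian E)) ^ 2 := by
        rw [mul_pow, mul_pow, mul_pow, sq_abs]
      _ ≤ (K * μ) ^ 2 * Module.finrank ℝ E := by
        gcongr; exact sq_integral_norm_stdGaussian_le
  calc ‖gradient g z - w‖ ^ 2 ≤ (‖gradient g z - G‖ + ‖G - w‖) ^ 2 := by
        gcongr; exact norm_sub_le_norm_sub_add_norm_sub _ G w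
    _ ≤ 2 * (‖gradient g z - G‖ ^ 2 + ‖G - w‖ ^ 2) := add_sq_le
    _ ≤ _ := by linarith

end Gradient

theorem stdGaussian_eq_stdGaussian_euclideanSpace (d : ℕ) :
    _root_.stdGaussian d = ProbabilityTheory.stdGaussian (EuclideanSpace ℝ (Fin d)) :=
  map_pi_eq_stdGaussian

theorem sq_norm_gradient_sub_le_of_smoothing_euclidean {d : ℕ} {g : EuclideanSpace ℝ (Fin d) → ℝ}
    {ℓ : ℝ} (hg : Differentiable ℝ g)
    (hℓ : ∀ a b, ‖gradient g a - gradient g b‖ ^ 2 ≤ ℓ ^ 2 * ‖a - b‖ ^ 2)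
    (μ : ℝ) (z w : EuclideanSpace ℝ (Fin d)) :
    ‖gradient g z - w‖ ^ 2 ≤
      2 * ‖gradient (fun z' => ∫ ν, g (z' + μ • ν) ∂(stdGaussian d)) z - w‖ ^ 2 +
        μ ^ 2 / 2 * ℓ ^ 2 * ((d : ℝ) + 3) ^ 3 := by
  have h := sq_norm_gradient_sub_le_of_stdGaussian_smoothing hg
    (lipschitzWith_fderiv_of_sq_norm_gradient_sub_le hℓ) μ z w
  rw [finrank_euclideanSpace_fin, coe_nnnorm, Real.norm_eq_abs, mul_pow, sq_abs] at h
  have hd : 4 * (d : ℝ) ≤ ((d : ℝ) + 3) ^ 3 := by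
    have : (0 : ℝ) ≤ d := d.cast_nonneg
    nlinarith [pow_nonneg this 2, pow_nonneg this 3]
  have hconst : 2 * (ℓ ^ 2 * μ ^ 2) * d ≤ μ ^ 2 / 2 * ℓ ^ 2 * ((d : ℝ) + 3) ^ 3 := by
    nlinarith [mul_nonneg (sq_nonneg ℓ) (sq_nonneg μ)]
  rw [stdGaussian_eq_stdGaussian_euclideanSpace]
  exact h.trans (add_le_add le_rfl hconst)

theorem zo_vrgda_stmt8_general (d1 d2 : ℕ)
    (f : EuclideanSpace ℝ (Fin d1) → EuclideanSpace ℝ (Fin d2) → ℝ)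
    (ℓ μ₁ μ₂ : ℝ)
    (hdiff : Differentiable ℝ
      (fun p : EuclideanSpace ℝ (Fin d1) × EuclideanSpace ℝ (Fin d2) => f p.1 p.2))
    (hlip : ∀ x x' y y',
      ‖gradient (fun x'' => f x'' y) x - gradient (fun x'' => f x'' y') x'‖ ^ 2 +
          ‖gradient (f x) y - gradient (f x') y'‖ ^ 2 ≤
        ℓ ^ 2 * (‖x - x'‖ ^ 2 + ‖y - y'‖ ^ 2)) :
    ∀ (x : EuclideanSpace ℝ (Fin d1)) (y : EuclideanSpace ℝ (Fin d2))
      (v : EuclideanSpace ℝ (Fin d1)) (u : EuclideanSpace ℝ (Fin d2)),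
      (‖gradient (fun x' => f x' y) x - v‖ ^ 2 + ‖gradient (f x) y - u‖ ^ 2 ≤
        2 * (‖gradient (fun x' => ∫ ν, f (x' + μ₁ • ν) y ∂(stdGaussian d1)) x - v‖ ^ 2 +
            ‖gradient (fun y' => ∫ ω, f x (y' + μ₂ • ω) ∂(stdGaussian d2)) y - u‖ ^ 2) +
          μ₁ ^ 2 / 2 * ℓ ^ 2 * ((d1 : ℝ) + 3) ^ 3 +
          μ₂ ^ 2 / 2 * ℓ ^ 2 * ((d2 : ℝ) + 3) ^ 3) ∧
      (‖gradient (f x) y‖ ^ 2 ≤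
        2 * ‖gradient (fun y' => ∫ ω, f x (y' + μ₂ • ω) ∂(stdGaussian d2)) y‖ ^ 2 +
          μ₂ ^ 2 / 2 * ℓ ^ 2 * ((d2 : ℝ) + 3) ^ 3) := by
  intro x y v u
  have hdiff_x : Differentiable ℝ (fun x' => f x' y) :=
    hdiff.comp (differentiable_id.prodMk (differentiable_const y))
  have hdiff_y : Differentiable ℝ (f x) :=
    hdiff.comp ((differentiable_const x).prodMk differentiable_id)
  have hlip_x : ∀ a b, ‖gradient (fun x' => f x' y) a - gradient (fun x' => f x' y) b‖ ^ 2 ≤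
      ℓ ^ 2 * ‖a - b‖ ^ 2 := fun a b => by
    have := hlip a b y y
    rw [sub_self, norm_zero, zero_pow two_ne_zero, add_zero] at this
    linarith [sq_nonneg ‖gradient (f a) y - gradient (f b) y‖]
  have hlip_y : ∀ a b, ‖gradient (f x) a - gradient (f x) b‖ ^ 2 ≤ ℓ ^ 2 * ‖a - b‖ ^ 2 :=
    fun a b => by
      have := hlip x x a b
      rw [sub_self, norm_zero, zero_pow two_ne_zero, zero_add] at this
      linarith [sq_nonneg ‖gradient (fun x' => f x' a) x - gradient (fun x' => f x' b) x‖]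
  have hx := sq_norm_gradient_sub_le_of_smoothing_euclidean hdiff_x hlip_x μ₁ x v
  have hy := sq_norm_gradient_sub_le_of_smoothing_euclidean hdiff_y hlip_y μ₂ y u
  have hy₀ := sq_norm_gradient_sub_le_of_smoothing_euclidean hdiff_y hlip_y μ₂ y 0
  simp only [sub_zero] at hy₀
  exact ⟨by linarith, hy₀⟩

/-- for `f` differentiable with `ℓ`-Lipschitz gradient and partial Gaussian
smoothings `f_{μ₁}(x,y) = E_ν[f(x+μ₁ν,y)]`, `f_{μ₂}(x,y) = E_ω[f(x,y+μ₂ω)]`, one has, for every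
`(x,y)` and every `v, u`:
(i) `‖∇_x f(x,y)−v‖² + ‖∇_y f(x,y)−u‖² ≤ 2(‖∇_x f_{μ₁}(x,y)−v‖² + ‖∇_y f_{μ₂}(x,y)−u‖²)
      + (μ₁²/2)ℓ²(d1+3)³ + (μ₂²/2)ℓ²(d2+3)³`, and
(ii) `‖∇_y f(x,y)‖² ≤ 2‖∇_y f_{μ₂}(x,y)‖² + (μ₂²/2)ℓ²(d2+3)³`. -/
theorem zo_vrgda_stmt8 (d1 d2 : ℕ)
    (f : EuclideanSpace ℝ (Fin d1) → EuclideanSpace ℝ (Fin d2) → ℝ)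
    (ℓ μ₁ μ₂ : ℝ) (hμ₁ : 0 < μ₁) (hμ₂ : 0 < μ₂)
    (hdiff : Differentiable ℝ
      (fun p : EuclideanSpace ℝ (Fin d1) × EuclideanSpace ℝ (Fin d2) => f p.1 p.2))
    (hlip : ∀ x x' y y',
      ‖gradient (fun x'' => f x'' y) x - gradient (fun x'' => f x'' y') x'‖ ^ 2 +
          ‖gradient (f x) y - gradient (f x') y'‖ ^ 2 ≤
        ℓ ^ 2 * (‖x - x'‖ ^ 2 + ‖y - y'‖ ^ 2)) :
    ∀ (x : EuclideanSpace ℝ (Fin d1)) (y : EuclideanSpace ℝ (Fin d2))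
      (v : EuclideanSpace ℝ (Fin d1)) (u : EuclideanSpace ℝ (Fin d2)),
      (‖gradient (fun x' => f x' y) x - v‖ ^ 2 + ‖gradient (f x) y - u‖ ^ 2 ≤
        2 * (‖gradient (fun x' => ∫ ν, f (x' + μ₁ • ν) y ∂(stdGaussian d1)) x - v‖ ^ 2 +
            ‖gradient (fun y' => ∫ ω, f x (y' + μ₂ • ω) ∂(stdGaussian d2)) y - u‖ ^ 2) +
          μ₁ ^ 2 / 2 * ℓ ^ 2 * ((d1 : ℝ) + 3) ^ 3 +
          μ₂ ^ 2 / 2 * ℓ ^ 2 * ((d2 : ℝ) + 3) ^ 3) ∧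
      (‖gradient (f x) y‖ ^ 2 ≤
        2 * ‖gradient (fun y' => ∫ ω, f x (y' + μ₂ • ω) ∂(stdGaussian d2)) y‖ ^ 2 +
          μ₂ ^ 2 / 2 * ℓ ^ 2 * ((d2 : ℝ) + 3) ^ 3) :=
  zo_vrgda_stmt8_general d1 d2 f ℓ μ₁ μ₂ hdiff hlip
end

section
/- Let f : ℝ^{d1} × ℝ^{d2} → ℝ be differentiable with ℓ-Lipschitz gradient and μ-strongly concave in y for every fixed x (0 < μ ≤ ℓ), let κ = ℓ/μ, Φ(x) = max_{y} f(x,y), and L = (κ+1)ℓ. Then for every (x,y) ∈ ℝ^{d1} × ℝ^{d2}, every v ∈ ℝ^{d1}, and every stepsize α > 0, the point x⁺ = x − αv satisfies: Φ(x⁺) ≤ Φ(x) + ακ²‖∇_y f(x,y)‖² + α‖∇_x f(x,y) − v‖² − (α/2 − Lα²/2)‖v‖². -/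
/-!
Write `x⁺ = x - α • v` and `y₀ = y*(x)`, so that `∇_y f(x, y₀) = 0`. Strong concavity in `y`
moves the maximiser from `y₀` to `y*(x⁺)` at a cost of at most
`‖∇_y f(x⁺, y₀)‖² / (2μ) ≤ κ ℓ α² ‖v‖² / 2`, and the descent lemma for the `ℓ`-smooth map
`f(·, y₀)` moves `x` to `x⁺` at a cost of `-α ⟪∇ₓ f(x, y₀), v⟫ + ℓ α² ‖v‖² / 2`. The inner
product is compared with `v` through `∇ₓ f(x, y)`, and
`‖∇ₓ f(x, y₀) - ∇ₓ f(x, y)‖ ≤ ℓ ‖y - y₀‖ ≤ κ ‖∇_y f(x, y)‖` by the error bound of strong concavity.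
-/

open Set

theorem image_le_add_deriv_mul_add_of_deriv_sub_le {φ φ' : ℝ → ℝ} {a b K : ℝ} (hab : a ≤ b)
    (hφ : ∀ t, HasDerivAt φ (φ' t) t) (hφ' : ∀ t ∈ Ico a b, φ' t ≤ φ' a + K * (t - a)) :
    φ b ≤ φ a + φ' a * (b - a) + K / 2 * (b - a) ^ 2 := by
  have hB (t : ℝ) : HasDerivAt (fun t => φ a + φ' a * (t - a) + K / 2 * (t - a) ^ 2)
      (φ' a + K * (t - a)) t := by
    have hsq := (((hasDerivAt_id' t).sub_const a).fun_pow 2).const_mul (K / 2)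
    refine ((((hasDerivAt_id' t).sub_const a).const_mul (φ' a)).const_add (φ a)).fun_add hsq
      |>.congr_deriv ?_
    simp only [Nat.cast_ofNat, mul_one]; ring
  refine image_le_of_deriv_right_le_deriv_boundary
    (fun t _ => (hφ t).continuousAt.continuousWithinAt) (fun t _ => (hφ t).hasDerivWithinAt)
    (by simp) (fun t _ => (hB t).continuousAt.continuousWithinAt)
    (fun t _ => (hB t).hasDerivWithinAt) hφ' (right_mem_Icc.2 hab)

section InnerProductSpace

variable {E : Type*} [NormedAddCommGroup E] [InnerProductSpace ℝ E]

theorem real_inner_sub_half_mul_norm_sq_le {μ : ℝ} (hμ : 0 < μ) (a d : E) :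
    inner ℝ a d - μ / 2 * ‖d‖ ^ 2 ≤ ‖a‖ ^ 2 / (2 * μ) := by
  have hinner := real_inner_le_norm a d
  rw [le_div_iff₀ (by positivity)]
  nlinarith [sq_nonneg (‖a‖ - μ * ‖d‖)]

theorem neg_real_inner_le_norm_sub_sq_add_norm_sub_sq (g h v : E) :
    -inner ℝ g v ≤ ‖g - h‖ ^ 2 + ‖h - v‖ ^ 2 - ‖v‖ ^ 2 / 2 := by
  have hexpand := norm_sub_sq_real g v
  have htri := norm_sub_le_norm_sub_add_norm_sub g h v
  have hsq : ‖g - v‖ ^ 2 ≤ (‖g - h‖ + ‖h - v‖) ^ 2 := by gcongr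
  nlinarith [sq_nonneg (‖g - h‖ - ‖h - v‖), sq_nonneg ‖g‖]

variable [CompleteSpace E] {g : E → ℝ}

theorem IsLocalMax.gradient_eq_zero {x : E} (h : IsLocalMax g x) : gradient g x = 0 := by
  simp [gradient, h.fderiv_eq_zero]

theorem apply_add_le_of_lipschitz_gradient (hg : Differentiable ℝ g) {ℓ : ℝ}
    (hlip : ∀ a b, ‖gradient g a - gradient g b‖ ≤ ℓ * ‖a - b‖) (x d : E) :
    g (x + d) ≤ g x + inner ℝ (gradient g x) d + ℓ / 2 * ‖d‖ ^ 2 := by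
  have hφ (t : ℝ) : HasDerivAt (fun t : ℝ => g (x + t • d))
      (inner ℝ (gradient g (x + t • d)) d) t := by
    have hline : HasDerivAt (fun t : ℝ => x + t • d) d t := by
      simpa using ((hasDerivAt_id t).smul_const d).const_add x
    exact ((hg _).hasGradientAt.hasFDerivAt.comp_hasDerivAt t hline).congr_deriv
      (InnerProductSpace.toDual_apply_apply ..)
  have hφ' (t : ℝ) (ht : t ∈ Ico (0 : ℝ) 1) :
      inner ℝ (gradient g (x + t • d)) d ≤ inner ℝ (gradient g (x + (0 : ℝ) • d)) d
        + ℓ * ‖d‖ ^ 2 * (t - 0) := by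
    have hinc : inner ℝ (gradient g (x + t • d) - gradient g x) d ≤ ℓ * ‖d‖ ^ 2 * t :=
      calc _ ≤ ‖gradient g (x + t • d) - gradient g x‖ * ‖d‖ := real_inner_le_norm _ _
        _ ≤ ℓ * ‖t • d‖ * ‖d‖ := by gcongr; simpa using hlip (x + t • d) x
        _ = ℓ * ‖d‖ ^ 2 * t := by rw [norm_smul, Real.norm_of_nonneg ht.1]; ring
    rw [inner_sub_left] at hinc
    simp only [zero_smul, add_zero, sub_zero]
    linarith
  have key := image_le_add_deriv_mul_add_of_deriv_sub_le zero_le_one hφ hφ'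
  simp only [zero_smul, add_zero, one_smul, sub_zero, one_pow, mul_one] at key
  linarith

end InnerProductSpace

section StronglyConcave

variable {F : Type*} [NormedAddCommGroup F] [InnerProductSpace ℝ F] [CompleteSpace F]
  {g : F → ℝ} {μ : ℝ}

theorem le_add_norm_gradient_sq_div_of_strongly_concave (hμ : 0 < μ)
    (hconc : ∀ y y', g y ≤ g y' + inner ℝ (gradient g y') (y - y') - μ / 2 * ‖y - y'‖ ^ 2)
    (y y' : F) : g y ≤ g y' + ‖gradient g y'‖ ^ 2 / (2 * μ) := by
  linarith [hconc y y', real_inner_sub_half_mul_norm_sq_le hμ (gradient g y') (y - y')]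

theorem mul_norm_sub_le_norm_gradient_of_strongly_concave
    (hconc : ∀ y y', g y ≤ g y' + inner ℝ (gradient g y') (y - y') - μ / 2 * ‖y - y'‖ ^ 2)
    {y₀ : F} (hmax : IsMaxOn g univ y₀) (y : F) : μ * ‖y - y₀‖ ≤ ‖gradient g y‖ := by
  have h₀ := hconc y y₀
  have h₁ := hconc y₀ y
  rw [(hmax.isLocalMax Filter.univ_mem).gradient_eq_zero, inner_zero_left] at h₀
  rw [norm_sub_rev y₀] at h₁
  have hinner : inner ℝ (gradient g y) (y₀ - y) ≤ ‖gradient g y‖ * ‖y - y₀‖ := by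
    simpa only [norm_sub_rev y₀] using real_inner_le_norm (gradient g y) (y₀ - y)
  rcases (norm_nonneg (y - y₀)).eq_or_lt with h | h
  · rw [← h, mul_zero]; exact norm_nonneg _
  · exact le_of_mul_le_mul_right (by nlinarith) h

end StronglyConcave

section Minimax

variable {E F : Type*} [NormedAddCommGroup E] [InnerProductSpace ℝ E] [CompleteSpace E]
  [NormedAddCommGroup F] [InnerProductSpace ℝ F] [CompleteSpace F] {f : E → F → ℝ} {ℓ μ : ℝ}

def JointGradientLipschitzWith (f : E → F → ℝ) (ℓ : ℝ) : Prop :=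
  ∀ x x' y y',
    ‖gradient (fun x'' => f x'' y) x - gradient (fun x'' => f x'' y') x'‖ ^ 2 +
        ‖gradient (f x) y - gradient (f x') y'‖ ^ 2 ≤
      ℓ ^ 2 * (‖x - x'‖ ^ 2 + ‖y - y'‖ ^ 2)

theorem norm_gradient_fst_sub_le (hℓ : 0 ≤ ℓ)
    (hlip : JointGradientLipschitzWith f ℓ) (x x' : E) (y y' : F) :
    ‖gradient (fun x'' => f x'' y) x - gradient (fun x'' => f x'' y') x'‖ ≤
      ℓ * √(‖x - x'‖ ^ 2 + ‖y - y'‖ ^ 2) := by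
  rw [← Real.sqrt_sq hℓ, ← Real.sqrt_mul (sq_nonneg ℓ)]
  exact (le_abs_self _).trans <| Real.abs_le_sqrt <| by
    nlinarith [hlip x x' y y', sq_nonneg ‖gradient (f x) y - gradient (f x') y'‖]

theorem norm_gradient_snd_sub_le (hℓ : 0 ≤ ℓ)
    (hlip : JointGradientLipschitzWith f ℓ) (x x' : E) (y y' : F) :
    ‖gradient (f x) y - gradient (f x') y'‖ ≤ ℓ * √(‖x - x'‖ ^ 2 + ‖y - y'‖ ^ 2) := by
  rw [← Real.sqrt_sq hℓ, ← Real.sqrt_mul (sq_nonneg ℓ)]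
  exact (le_abs_self _).trans <| Real.abs_le_sqrt <| by
    nlinarith [hlip x x' y y',
      sq_nonneg ‖gradient (fun x'' => f x'' y) x - gradient (fun x'' => f x'' y') x'‖]

variable {ystar : E → F}

theorem apply_add_argmax_le (hμ : 0 < μ) (hℓ : 0 ≤ ℓ)
    (hdiff : ∀ y, Differentiable ℝ fun x => f x y)
    (hlip : JointGradientLipschitzWith f ℓ)
    (hconc : ∀ x y y',
      f x y ≤ f x y' + inner ℝ (gradient (f x) y') (y - y') - μ / 2 * ‖y - y'‖ ^ 2)
    (hystar : ∀ x, IsMaxOn (f x) univ (ystar x)) (x d : E) :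
    f (x + d) (ystar (x + d)) ≤ f x (ystar x) +
      inner ℝ (gradient (fun x' => f x' (ystar x)) x) d + (ℓ / μ + 1) * ℓ / 2 * ‖d‖ ^ 2 := by
  set y₀ := ystar x
  have hmove_y := le_add_norm_gradient_sq_div_of_strongly_concave hμ (hconc (x + d))
    (ystar (x + d)) y₀
  have hgrad_y : ‖gradient (f (x + d)) y₀‖ ≤ ℓ * ‖d‖ := by
    have hcrit : gradient (f x) y₀ = 0 :=
      ((hystar x).isLocalMax Filter.univ_mem).gradient_eq_zero
    simpa [hcrit] using norm_gradient_snd_sub_le hℓ hlip (x + d) x y₀ y₀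
  have hmove_x := apply_add_le_of_lipschitz_gradient (hdiff y₀)
    (fun a b => by simpa using norm_gradient_fst_sub_le hℓ hlip a b y₀ y₀) x d
  have hsq : ‖gradient (f (x + d)) y₀‖ ^ 2 / (2 * μ) ≤ ℓ / μ * ℓ / 2 * ‖d‖ ^ 2 :=
    calc _ ≤ (ℓ * ‖d‖) ^ 2 / (2 * μ) := by gcongr
      _ = ℓ / μ * ℓ / 2 * ‖d‖ ^ 2 := by field_simp
  linarith

theorem norm_gradient_fst_argmax_sub_le (hμ : 0 < μ) (hℓ : 0 ≤ ℓ)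
    (hlip : JointGradientLipschitzWith f ℓ)
    (hconc : ∀ x y y',
      f x y ≤ f x y' + inner ℝ (gradient (f x) y') (y - y') - μ / 2 * ‖y - y'‖ ^ 2)
    (hystar : ∀ x, IsMaxOn (f x) univ (ystar x)) (x : E) (y : F) :
    ‖gradient (fun x' => f x' (ystar x)) x - gradient (fun x' => f x' y) x‖ ≤
      ℓ / μ * ‖gradient (f x) y‖ :=
  calc _ ≤ ℓ * ‖ystar x - y‖ := by simpa using norm_gradient_fst_sub_le hℓ hlip x x (ystar x) y
    _ = ℓ / μ * (μ * ‖y - ystar x‖) := by rw [norm_sub_rev]; field_simp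
    _ ≤ ℓ / μ * ‖gradient (f x) y‖ := by
      gcongr; exact mul_norm_sub_le_norm_gradient_of_strongly_concave (hconc x) (hystar x) y

end Minimax

/-- under the nonconvex–strongly-concave assumptions, with
`Φ(x) = max_y f(x,y) = f(x, y*(x))`, `κ = ℓ/μ` and `L = (κ+1)ℓ`, for every `(x,y)`, every
`v` and every stepsize `α > 0`, the point `x⁺ = x − αv` satisfies
`Φ(x⁺) ≤ Φ(x) + ακ²‖∇_y f(x,y)‖² + α‖∇_x f(x,y) − v‖² − (α/2 − Lα²/2)‖v‖²`. -/
theorem zo_vrgda_stmt14 (d1 d2 : ℕ)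
    (f : EuclideanSpace ℝ (Fin d1) → EuclideanSpace ℝ (Fin d2) → ℝ)
    (ℓ μ : ℝ) (hμ : 0 < μ) (hμℓ : μ ≤ ℓ)
    (hdiff : Differentiable ℝ
      (fun p : EuclideanSpace ℝ (Fin d1) × EuclideanSpace ℝ (Fin d2) => f p.1 p.2))
    (hlip : ∀ x x' y y',
      ‖gradient (fun x'' => f x'' y) x - gradient (fun x'' => f x'' y') x'‖ ^ 2 +
          ‖gradient (f x) y - gradient (f x') y'‖ ^ 2 ≤
        ℓ ^ 2 * (‖x - x'‖ ^ 2 + ‖y - y'‖ ^ 2))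
    (hconc : ∀ x y y',
      f x y ≤ f x y' + (inner ℝ (gradient (f x) y') (y - y') : ℝ) - μ / 2 * ‖y - y'‖ ^ 2)
    (ystar : EuclideanSpace ℝ (Fin d1) → EuclideanSpace ℝ (Fin d2))
    (hystar : ∀ x, IsMaxOn (f x) Set.univ (ystar x)) :
    ∀ (x : EuclideanSpace ℝ (Fin d1)) (y : EuclideanSpace ℝ (Fin d2))
      (v : EuclideanSpace ℝ (Fin d1)) (α : ℝ), 0 < α →
      f (x - α • v) (ystar (x - α • v)) ≤
        f x (ystar x) + α * (ℓ / μ) ^ 2 * ‖gradient (f x) y‖ ^ 2 +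
          α * ‖gradient (fun x' => f x' y) x - v‖ ^ 2 -
          (α / 2 - (ℓ / μ + 1) * ℓ * α ^ 2 / 2) * ‖v‖ ^ 2 := by
  intro x y v α hα
  have hℓ : 0 ≤ ℓ := hμ.le.trans hμℓ
  have hdiff_x (y : EuclideanSpace ℝ (Fin d2)) : Differentiable ℝ fun x => f x y :=
    hdiff.comp (differentiable_id.prodMk (differentiable_const y))
  have hstep := apply_add_argmax_le hμ hℓ hdiff_x hlip hconc hystar x (-(α • v))
  rw [← sub_eq_add_neg, inner_neg_right, real_inner_smul_right, norm_neg, norm_smul,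
    Real.norm_of_nonneg hα.le] at hstep
  have hinner := neg_real_inner_le_norm_sub_sq_add_norm_sub_sq
    (gradient (fun x' => f x' (ystar x)) x) (gradient (fun x' => f x' y) x) v
  have hshift := pow_le_pow_left₀ (norm_nonneg _)
    (norm_gradient_fst_argmax_sub_le hμ hℓ hlip hconc hystar x y) 2
  rw [mul_pow] at hshift
  linarith [mul_le_mul_of_nonneg_left hinner hα.le, mul_le_mul_of_nonneg_left hshift hα.le]
end
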